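/- Let L ⊂ ℝⁿ be a convex body with 0 ∈ int L and L ⊂ −rL for some r ≥ 1, let 0 < C ≤ 1 and z ∈ (1−C)L. If f ∈ ℝⁿ satisfies ‖f‖_{(L_z)°} ≤ 1 and A := 1 + ⟨f, z⟩, then 1/((1−C)r + 1) ≤ A ≤ 1/C and ‖f‖_{L°} ≤ A. -/

import Mathlib

/-!
Since `L_z` is bounded, its polar is a closed convex neighbourhood of `0`, so `‖f‖_{(L_z)°} ≤ 1`
means `f ∈ (L_z)°`, i.e. `⟪f, x⟫ ≤ A` for every `x ∈ L`. Everything follows from this bound: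
it gives `f ∈ A • L°`; applied to `z = (1 - C) l` it gives `A ≤ 1 + (1 - C) A`; and applied to
`z = -(1 - C) r m` (from `L ⊆ -r L`) it gives `A ≥ 1 - (1 - C) r A`.
-/

open RealInnerProductSpace Pointwise

/-- The polar body of a set in Euclidean space. -/
def polarSet {n : ℕ} (M : Set (EuclideanSpace ℝ (Fin n))) : Set (EuclideanSpace ℝ (Fin n)) :=
  {x | ∀ y ∈ M, inner ℝ x y ≤ (1 : ℝ)}

section InnerBounds

variable {E : Type*} [NormedAddCommGroup E] [InnerProductSpace ℝ E]

lemma inner_le_mul_of_mem_smul {L : Set E} {f z : E} {A t : ℝ} (hA : ∀ x ∈ L, ⟪f, x⟫ ≤ A)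
    (ht : 0 ≤ t) (hz : z ∈ t • L) : ⟪f, z⟫ ≤ t * A := by
  obtain ⟨l, hl, rfl⟩ := hz
  rw [real_inner_smul_right]
  exact mul_le_mul_of_nonneg_left (hA l hl) ht

lemma neg_mul_le_inner_of_mem_neg_smul {L : Set E} {f z : E} {A t : ℝ}
    (hA : ∀ x ∈ L, ⟪f, x⟫ ≤ A) (ht : 0 ≤ t) (hz : z ∈ (-t) • L) : -(t * A) ≤ ⟪f, z⟫ := by
  obtain ⟨m, hm, rfl⟩ := hz
  rw [real_inner_smul_right, neg_mul, neg_le_neg_iff]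
  exact mul_le_mul_of_nonneg_left (hA m hm) ht

end InnerBounds

section Polar

variable {n : ℕ}

lemma convex_polarSet (M : Set (EuclideanSpace ℝ (Fin n))) : Convex ℝ (polarSet M) := by
  intro a ha b hb s t hs ht hst y hy
  calc ⟪s • a + t • b, y⟫ = s * ⟪a, y⟫ + t * ⟪b, y⟫ := by
        rw [inner_add_left, real_inner_smul_left, real_inner_smul_left]
    _ ≤ s * 1 + t * 1 := by gcongr <;> [exact ha y hy; exact hb y hy]
    _ = 1 := by rw [mul_one, mul_one, hst]

lemma isClosed_polarSet (M : Set (EuclideanSpace ℝ (Fin n))) : IsClosed (polarSet M) := by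
  have hM : polarSet M = ⋂ y ∈ M, {x | ⟪x, y⟫ ≤ 1} := by
    ext x
    simp [polarSet]
  rw [hM]
  exact isClosed_biInter fun y _ => isClosed_le (continuous_id.inner continuous_const)
    continuous_const

lemma polarSet_mem_nhds_zero {M : Set (EuclideanSpace ℝ (Fin n))}
    (hM : Bornology.IsBounded M) : polarSet M ∈ nhds 0 := by
  obtain ⟨R, hR, hMR⟩ := hM.subset_closedBall_lt 0 0
  refine Filter.mem_of_superset (Metric.closedBall_mem_nhds 0 (inv_pos.mpr hR)) ?_
  intro x hx y hy
  rw [mem_closedBall_zero_iff] at hx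
  have hy' : ‖y‖ ≤ R := mem_closedBall_zero_iff.mp (hMR hy)
  calc ⟪x, y⟫ ≤ ‖x‖ * ‖y‖ := real_inner_le_norm x y
    _ ≤ R⁻¹ * R := mul_le_mul hx hy' (norm_nonneg y) (inv_nonneg.mpr hR.le)
    _ = 1 := inv_mul_cancel₀ hR.ne'

lemma mem_polarSet_of_gauge_le_one {M : Set (EuclideanSpace ℝ (Fin n))}
    (hM : Bornology.IsBounded M) {f : EuclideanSpace ℝ (Fin n)}
    (hf : gauge (polarSet M) f ≤ 1) : f ∈ polarSet M := by
  rwa [gauge_le_one_iff_mem_closure (convex_polarSet M) (polarSet_mem_nhds_zero hM),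
    (isClosed_polarSet M).closure_eq] at hf

lemma mem_polarSet_image_sub_iff {L : Set (EuclideanSpace ℝ (Fin n))}
    {f z : EuclideanSpace ℝ (Fin n)} :
    f ∈ polarSet ((fun w => w - z) '' L) ↔ ∀ x ∈ L, ⟪f, x⟫ ≤ 1 + ⟪f, z⟫ := by
  simp only [polarSet, Set.forall_mem_image, Set.mem_ofPred_eq, inner_sub_right,
    sub_le_iff_le_add]

lemma gauge_polarSet_le {L : Set (EuclideanSpace ℝ (Fin n))} {f : EuclideanSpace ℝ (Fin n)}
    {A : ℝ} (hApos : 0 < A) (hA : ∀ x ∈ L, ⟪f, x⟫ ≤ A) : gauge (polarSet L) f ≤ A := by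
  refine gauge_le_of_mem hApos.le ((Set.mem_smul_set_iff_inv_smul_mem₀ hApos.ne' _ _).mpr ?_)
  intro x hx
  rw [real_inner_smul_left, inv_mul_le_one₀ hApos]
  exact hA x hx

end Polar

theorem polar_gauge_translate_bounds_general {n : ℕ} (L : Set (EuclideanSpace ℝ (Fin n)))
    (hLcomp : IsCompact L)
    (r : ℝ) (hr : 1 ≤ r) (hLr : L ⊆ (-r) • L)
    (C : ℝ) (hC0 : 0 < C) (hC1 : C ≤ 1)
    (z : EuclideanSpace ℝ (Fin n)) (hz : z ∈ (1 - C) • L)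
    (f : EuclideanSpace ℝ (Fin n))
    (hf : gauge (polarSet ((fun w => w - z) '' L)) f ≤ 1) :
    1 / ((1 - C) * r + 1) ≤ 1 + ⟪f, z⟫ ∧ 1 + ⟪f, z⟫ ≤ 1 / C ∧
      gauge (polarSet L) f ≤ 1 + ⟪f, z⟫ := by
  have hA : ∀ x ∈ L, ⟪f, x⟫ ≤ 1 + ⟪f, z⟫ := mem_polarSet_image_sub_iff.mp <|
    mem_polarSet_of_gauge_le_one (hLcomp.image (continuous_sub_right z)).isBounded hf
  have hC : 0 ≤ 1 - C := sub_nonneg.mpr hC1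
  have hCr : 0 ≤ (1 - C) * r := mul_nonneg hC (by linarith)
  have hz' : z ∈ (-((1 - C) * r)) • L := by
    rw [← mul_neg, ← smul_smul]
    exact Set.smul_set_mono hLr hz
  have hupper := inner_le_mul_of_mem_smul hA hC hz
  have hlower := neg_mul_le_inner_of_mem_neg_smul hA hCr hz'
  have hlow : 1 / ((1 - C) * r + 1) ≤ 1 + ⟪f, z⟫ := by
    rw [div_le_iff₀ (by linarith)]
    linarith
  refine ⟨hlow, ?_, gauge_polarSet_le (lt_of_lt_of_le (by positivity) hlow) hA⟩
  rw [le_div_iff₀ hC0]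
  linarith

theorem polar_gauge_translate_bounds {n : ℕ} (L : Set (EuclideanSpace ℝ (Fin n)))
    (hLcomp : IsCompact L) (hLconv : Convex ℝ L) (h0 : 0 ∈ interior L)
    (r : ℝ) (hr : 1 ≤ r) (hLr : L ⊆ (-r) • L)
    (C : ℝ) (hC0 : 0 < C) (hC1 : C ≤ 1)
    (z : EuclideanSpace ℝ (Fin n)) (hz : z ∈ (1 - C) • L)
    (f : EuclideanSpace ℝ (Fin n))
    (hf : gauge (polarSet ((fun w => w - z) '' L)) f ≤ 1) :
    1 / ((1 - C) * r + 1) ≤ 1 + ⟪f, z⟫ ∧ 1 + ⟪f, z⟫ ≤ 1 / C ∧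
      gauge (polarSet L) f ≤ 1 + ⟪f, z⟫ :=
  polar_gauge_translate_bounds_general L hLcomp r hr hLr C hC0 hC1 z hz f hf
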